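/- arXiv:0806.1390 — 2 statements merged into one kernel-verified Lean document; each statement's English description precedes it below -/
import Mathlib

section
/- Every t-(v,k) trade has volume s ≥ 2^t. -/
/-- `T1, T2` form a `t`-`(v,k)` trade on the ground type `α` (the `v`-set):
two multisets of `k`-element blocks with no block in common, of positive
volume, such that every `t`-subset is contained in the same number of blocks
of `T1` as of `T2`. -/
def IsTrade {α : Type} [DecidableEq α] (t k : ℕ) (T1 T2 : Multiset (Finset α)) : Prop :=
  (∀ B ∈ T1, B.card = k) ∧
  (∀ B ∈ T2, B.card = k) ∧
  (∀ B ∈ T1, B ∉ T2) ∧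
  T1 ≠ 0 ∧
  ∀ A : Finset α, A.card = t →
    Multiset.countP (fun B => A ⊆ B) T1 = Multiset.countP (fun B => A ⊆ B) T2

/-- A Steiner trade: every `t`-subset appears in at most one block of each side. -/
def IsSteinerTrade {α : Type} [DecidableEq α] (t k : ℕ) (T1 T2 : Multiset (Finset α)) : Prop :=
  IsTrade t k T1 T2 ∧
  ∀ A : Finset α, A.card = t →
    Multiset.countP (fun B => A ⊆ B) T1 ≤ 1 ∧ Multiset.countP (fun B => A ⊆ B) T2 ≤ 1

/-- The foundation of a trade: all points covered by some block. -/
def foundation {α : Type} [DecidableEq α] (T1 T2 : Multiset (Finset α)) : Finset α :=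
  (T1 + T2).toFinset.biUnion id

/-- `rx T1 x`: the number of blocks of `T1` containing `x`. -/
def rx {α : Type} [DecidableEq α] (T1 : Multiset (Finset α)) (x : α) : ℕ :=
  Multiset.countP (fun B => x ∈ B) T1

/-- `lamxy T1 x y`: the number of blocks of `T1` containing both `x` and `y`. -/
def lamxy {α : Type} [DecidableEq α] (T1 : Multiset (Finset α)) (x y : α) : ℕ :=
  Multiset.countP (fun B => x ∈ B ∧ y ∈ B) T1

/-!
Induct on `t`. A trade has blocks `B ∈ T1`, `B' ∈ T2` with a point `x ∈ B' \ B`. Splitting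
each side by whether a block contains `x` gives two `(t-1)`-trades: the derived trade (blocks
through `x`, with `x` deleted), which is nonempty because `B'` contains `x`, and the residual
trade (blocks avoiding `x`), which is nonempty because `B` avoids `x`. Their volumes add up to the
volume of the trade, so it doubles at each step. The balance of the residual trade, and the
equality of the volumes of the two sides, come from the fact that a `t`-trade is also an
`i`-trade for `i ≤ t`, by double counting.
-/

open Finset

section Trades

variable {α : Type} [DecidableEq α]

def IsBalanced (t : ℕ) (T1 T2 : Multiset (Finset α)) : Prop :=
  ∀ A : Finset α, #A = t → T1.countP (A ⊆ ·) = T2.countP (A ⊆ ·)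

def derivedBlocks (x : α) (T : Multiset (Finset α)) : Multiset (Finset α) :=
  (T.filter (x ∈ ·)).map (·.erase x)

def residualBlocks (x : α) (T : Multiset (Finset α)) : Multiset (Finset α) :=
  T.filter (x ∉ ·)

theorem card_filter_insert_subset [Fintype α] (A B : Finset α) :
    #{x ∈ Aᶜ | insert x A ⊆ B} = if A ⊆ B then #B - #A else 0 := by
  split_ifs with hAB
  · rw [← card_sdiff_of_subset hAB]
    congr 1
    ext x
    simp only [mem_filter, mem_compl, mem_sdiff, insert_subset_iff]
    tauto
  · rw [card_eq_zero, filter_eq_empty_iff]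
    exact fun x _ hx => hAB ((subset_insert x A).trans hx)

/-- Double counting the pairs `(x, B)` with `A ⊆ B`, `x ∈ B \ A`. -/
theorem sum_compl_countP_insert_subset [Fintype α] {k : ℕ} (A : Finset α)
    {T : Multiset (Finset α)} (hT : ∀ B ∈ T, #B = k) :
    ∑ x ∈ Aᶜ, T.countP (insert x A ⊆ ·) = (k - #A) * T.countP (A ⊆ ·) := by
  induction T using Multiset.induction_on with
  | empty => simp
  | cons B T ih =>
    have hB : #B = k := hT B (Multiset.mem_cons_self B T)
    simp only [Multiset.countP_cons, sum_add_distrib]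
    rw [ih fun C hC => hT C (Multiset.mem_cons_of_mem hC), sum_boole, Nat.cast_id,
      card_filter_insert_subset, hB]
    split_ifs <;> ring

theorem mem_derivedBlocks {x : α} {C : Finset α} {T : Multiset (Finset α)} :
    C ∈ derivedBlocks x T ↔ x ∉ C ∧ insert x C ∈ T := by
  simp only [derivedBlocks, Multiset.mem_map, Multiset.mem_filter]
  constructor
  · rintro ⟨D, ⟨hD, hxD⟩, rfl⟩
    exact ⟨notMem_erase x D, by rwa [insert_erase hxD]⟩
  · rintro ⟨hxC, hC⟩
    exact ⟨insert x C, ⟨hC, mem_insert_self x C⟩, erase_insert hxC⟩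

theorem card_of_mem_derivedBlocks {x : α} {k : ℕ} {C : Finset α} {T : Multiset (Finset α)}
    (hT : ∀ B ∈ T, #B = k) (hC : C ∈ derivedBlocks x T) : #C = k - 1 := by
  obtain ⟨hxC, hC⟩ := mem_derivedBlocks.mp hC
  have := hT _ hC
  rw [card_insert_of_notMem hxC] at this
  omega

theorem countP_subset_derivedBlocks {x : α} {A : Finset α} (hxA : x ∉ A)
    (T : Multiset (Finset α)) :
    (derivedBlocks x T).countP (A ⊆ ·) = T.countP (insert x A ⊆ ·) := by
  rw [derivedBlocks, Multiset.countP_map, ← Multiset.countP_eq_card_filter, Multiset.countP_filter]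
  refine Multiset.countP_congr rfl fun C _ => ?_
  simp only [subset_erase, insert_subset_iff, eq_iff_iff]
  tauto

theorem countP_subset_derivedBlocks_of_mem {x : α} {A : Finset α} (hxA : x ∈ A)
    (T : Multiset (Finset α)) : (derivedBlocks x T).countP (A ⊆ ·) = 0 := by
  rw [Multiset.countP_eq_zero]
  intro C hC hAC
  obtain ⟨C', -, rfl⟩ := Multiset.mem_map.mp hC
  exact notMem_erase x C' (hAC hxA)

theorem countP_subset_residualBlocks_add (x : α) (A : Finset α) (T : Multiset (Finset α)) :
    (residualBlocks x T).countP (A ⊆ ·) + T.countP (insert x A ⊆ ·) = T.countP (A ⊆ ·) := by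
  rw [Multiset.countP_eq_countP_filter_add T (A ⊆ ·) (x ∈ ·), Multiset.countP_filter,
    residualBlocks, add_comm]
  congr 1
  refine Multiset.countP_congr rfl fun C _ => ?_
  simp only [insert_subset_iff, eq_iff_iff]
  tauto

theorem countP_subset_residualBlocks_of_mem {x : α} {A : Finset α} (hxA : x ∈ A)
    (T : Multiset (Finset α)) : (residualBlocks x T).countP (A ⊆ ·) = 0 :=
  Multiset.countP_eq_zero.mpr fun _ hC hAC => (Multiset.mem_filter.mp hC).2 (hAC hxA)

theorem card_derivedBlocks_add_card_residualBlocks (x : α) (T : Multiset (Finset α)) :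
    Multiset.card (derivedBlocks x T) + Multiset.card (residualBlocks x T) = Multiset.card T := by
  rw [derivedBlocks, residualBlocks, Multiset.card_map, ← Multiset.card_add,
    Multiset.filter_add_not]

namespace IsBalanced

variable {t k : ℕ} {T1 T2 : Multiset (Finset α)}

theorem of_succ [Fintype α] (h1 : ∀ B ∈ T1, #B = k) (h2 : ∀ B ∈ T2, #B = k) (htk : t < k)
    (h : IsBalanced (t + 1) T1 T2) : IsBalanced t T1 T2 := by
  intro A hA
  have hsum : ∑ x ∈ Aᶜ, T1.countP (insert x A ⊆ ·) = ∑ x ∈ Aᶜ, T2.countP (insert x A ⊆ ·) :=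
    sum_congr rfl fun x hx => h _ (by rw [card_insert_of_notMem (mem_compl.mp hx), hA])
  rw [sum_compl_countP_insert_subset A h1, sum_compl_countP_insert_subset A h2] at hsum
  exact Nat.eq_of_mul_eq_mul_left (by omega) hsum

theorem of_le [Fintype α] {i : ℕ} (h1 : ∀ B ∈ T1, #B = k) (h2 : ∀ B ∈ T2, #B = k)
    (hit : i ≤ t) (htk : t ≤ k) (h : IsBalanced t T1 T2) : IsBalanced i T1 T2 :=
  Nat.decreasingInduction (motive := fun j _ => IsBalanced j T1 T2)
    (fun _ hj hb => hb.of_succ h1 h2 (by omega)) h hit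

theorem card_eq [Fintype α] (h1 : ∀ B ∈ T1, #B = k) (h2 : ∀ B ∈ T2, #B = k) (htk : t ≤ k)
    (h : IsBalanced t T1 T2) : Multiset.card T1 = Multiset.card T2 := by
  simpa using h.of_le h1 h2 (Nat.zero_le t) htk ∅ card_empty

theorem derivedBlocks (x : α) (h : IsBalanced (t + 1) T1 T2) :
    IsBalanced t (derivedBlocks x T1) (derivedBlocks x T2) := by
  intro A hA
  by_cases hxA : x ∈ A
  · rw [countP_subset_derivedBlocks_of_mem hxA, countP_subset_derivedBlocks_of_mem hxA]
  · rw [countP_subset_derivedBlocks hxA, countP_subset_derivedBlocks hxA]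
    exact h _ (by rw [card_insert_of_notMem hxA, hA])

theorem residualBlocks (x : α) (h : IsBalanced t T1 T2) (h' : IsBalanced (t + 1) T1 T2) :
    IsBalanced t (residualBlocks x T1) (residualBlocks x T2) := by
  intro A hA
  by_cases hxA : x ∈ A
  · rw [countP_subset_residualBlocks_of_mem hxA, countP_subset_residualBlocks_of_mem hxA]
  · have hinsert := h' (insert x A) (by rw [card_insert_of_notMem hxA, hA])
    have h1 := countP_subset_residualBlocks_add x A T1
    have h2 := countP_subset_residualBlocks_add x A T2
    have := h A hA
    omega

end IsBalanced

namespace IsTrade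

variable {t k : ℕ} {T1 T2 : Multiset (Finset α)}

theorem isBalanced (hT : IsTrade t k T1 T2) : IsBalanced t T1 T2 := hT.2.2.2.2

theorem exists_mem_sdiff [Fintype α] (htk : t ≤ k) (hT : IsTrade t k T1 T2) :
    ∃ B ∈ T1, ∃ B' ∈ T2, ∃ x ∈ B', x ∉ B := by
  obtain ⟨h1, h2, hdisj, hne, hbal⟩ := hT
  obtain ⟨B, hB⟩ := Multiset.exists_mem_of_ne_zero hne
  have hcard := IsBalanced.card_eq h1 h2 htk hbal
  obtain ⟨B', hB'⟩ := Multiset.card_pos_iff_exists_mem.mp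
    (hcard ▸ Multiset.card_pos.mpr hne)
  have hBB' : ¬B' ⊆ B := fun hsub =>
    hdisj B hB (eq_of_subset_of_card_le hsub (by rw [h1 B hB, h2 B' hB']) ▸ hB')
  exact ⟨B, hB, B', hB', not_subset.mp hBB'⟩

theorem derivedBlocks [Fintype α] {x : α} {B : Finset α} (htk : t + 1 ≤ k)
    (hT : IsTrade (t + 1) k T1 T2) (hB : B ∈ T2) (hxB : x ∈ B) :
    IsTrade t (k - 1) (derivedBlocks x T1) (derivedBlocks x T2) := by
  have hbal := hT.isBalanced.derivedBlocks x
  obtain ⟨h1, h2, hdisj, -, -⟩ := hT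
  have hcard := hbal.card_eq (fun _ => card_of_mem_derivedBlocks h1)
    (fun _ => card_of_mem_derivedBlocks h2) (by omega)
  refine ⟨fun _ => card_of_mem_derivedBlocks h1, fun _ => card_of_mem_derivedBlocks h2,
    fun C hC1 hC2 => hdisj _ (mem_derivedBlocks.mp hC1).2 (mem_derivedBlocks.mp hC2).2, ?_, hbal⟩
  rw [← Multiset.card_pos, hcard]
  exact Multiset.card_pos_iff_exists_mem.mpr
    ⟨B.erase x, mem_derivedBlocks.mpr ⟨notMem_erase x B, by rwa [insert_erase hxB]⟩⟩

theorem residualBlocks [Fintype α] {x : α} {B : Finset α} (htk : t + 1 ≤ k)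
    (hT : IsTrade (t + 1) k T1 T2) (hB : B ∈ T1) (hxB : x ∉ B) :
    IsTrade t k (residualBlocks x T1) (residualBlocks x T2) := by
  have hbal := hT.isBalanced
  obtain ⟨h1, h2, hdisj, -, -⟩ := hT
  refine ⟨fun C hC => h1 C (Multiset.mem_of_mem_filter hC),
    fun C hC => h2 C (Multiset.mem_of_mem_filter hC),
    fun C hC1 hC2 => hdisj C (Multiset.mem_of_mem_filter hC1) (Multiset.mem_of_mem_filter hC2),
    Multiset.card_pos.mp (Multiset.card_pos_iff_exists_mem.mpr
      ⟨B, Multiset.mem_filter.mpr ⟨hB, hxB⟩⟩),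
    (hbal.of_succ h1 h2 htk).residualBlocks x hbal⟩

theorem two_pow_le_card [Fintype α] (htk : t ≤ k) (hT : IsTrade t k T1 T2) :
    2 ^ t ≤ Multiset.card T1 := by
  induction t generalizing k T1 T2 with
  | zero => exact Multiset.card_pos.mpr hT.2.2.2.1
  | succ t ih =>
    obtain ⟨B, hB, B', hB', x, hxB', hxB⟩ := hT.exists_mem_sdiff htk
    have hD := ih (by omega) (hT.derivedBlocks htk hB' hxB')
    have hR := ih (by omega) (hT.residualBlocks htk hB hxB)
    rw [← card_derivedBlocks_add_card_residualBlocks x T1, pow_succ]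
    omega

end IsTrade

end Trades

theorem trade_vol_ge_pow_general (v t k : ℕ) (htk : t < k)
    (T1 T2 : Multiset (Finset (Fin v))) (hT : IsTrade t k T1 T2) :
    2 ^ t ≤ Multiset.card T1 :=
  hT.two_pow_le_card htk.le

/-- Every `t`-`(v,k)` trade has volume `s ≥ 2^t`. -/
theorem trade_vol_ge_pow (v t k : ℕ) (ht : 0 < t) (htk : t < k) (hkv : k < v)
    (T1 T2 : Multiset (Finset (Fin v))) (hT : IsTrade t k T1 T2) :
    2 ^ t ≤ Multiset.card T1 :=
  trade_vol_ge_pow_general v t k htk T1 T2 hT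
end

section
/- Every t-(v,k) trade T satisfies |found(T)| ≥ k + t + 1. -/
/-!
Suppose `|found(T)| ≤ k + t` and pick a block `B ∈ T₁`; then `A := found(T) \ B` has at most
`t` points. Double counting pushes the balance of `T₁` and `T₂` on `t`-subsets down to all
subsets of size at most `t`, so by inclusion–exclusion `T₁` and `T₂` contain equally many blocks
disjoint from `A`. In `T₁` there is at least one, namely `B`; in `T₂` a block disjoint from `A`
lies inside `B`, hence equals `B`, which the disjointness of `T₁` and `T₂` forbids.
-/

open Finset

variable {α : Type} [DecidableEq α]

theorem card_filter_compl_insert_subset [Fintype α] {S B : Finset α} (hSB : S ⊆ B) :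
    #{x ∈ Sᶜ | insert x S ⊆ B} = #B - #S := by
  have : ({x ∈ Sᶜ | insert x S ⊆ B} : Finset α) = B \ S := by
    ext x
    simp [insert_subset_iff, hSB, and_comm]
  rw [this, card_sdiff_of_subset hSB]

theorem sum_countP_insert_subset [Fintype α] {k : ℕ} {T : Multiset (Finset α)}
    (hT : ∀ B ∈ T, #B = k) (S : Finset α) :
    ∑ x ∈ Sᶜ, T.countP (insert x S ⊆ ·) = (k - #S) * T.countP (S ⊆ ·) := by
  induction T using Multiset.induction with
  | empty => simp
  | cons B T ih =>
    simp only [Multiset.countP_cons, sum_add_distrib, mul_add,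
      ih fun C hC => hT C (Multiset.mem_cons_of_mem hC), sum_boole, Nat.cast_id]
    congr 1
    by_cases hSB : S ⊆ B
    · rw [card_filter_compl_insert_subset hSB, hT B (Multiset.mem_cons_self B T), if_pos hSB,
        mul_one]
    · have : ∀ x, ¬insert x S ⊆ B := fun x h => hSB ((subset_insert x S).trans h)
      simp [this, hSB]

theorem countP_subset_eq_of_card_le [Fintype α] {t k : ℕ} (htk : t ≤ k)
    {T₁ T₂ : Multiset (Finset α)} (h₁ : ∀ B ∈ T₁, #B = k) (h₂ : ∀ B ∈ T₂, #B = k)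
    (hbal : ∀ A : Finset α, #A = t → T₁.countP (A ⊆ ·) = T₂.countP (A ⊆ ·))
    {S : Finset α} (hS : #S ≤ t) : T₁.countP (S ⊆ ·) = T₂.countP (S ⊆ ·) := by
  obtain ⟨d, hd⟩ := Nat.exists_eq_add_of_le hS
  induction d generalizing S with
  | zero => exact hbal S hd.symm
  | succ d ih =>
    have hsum : ∑ x ∈ Sᶜ, T₁.countP (insert x S ⊆ ·) = ∑ x ∈ Sᶜ, T₂.countP (insert x S ⊆ ·) :=
      sum_congr rfl fun x hx => by
        have hcard := card_insert_of_notMem (mem_compl.mp hx)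
        exact ih (by omega) (by omega)
    rw [sum_countP_insert_subset h₁, sum_countP_insert_subset h₂] at hsum
    exact Nat.eq_of_mul_eq_mul_left (by omega) hsum

theorem countP_disjoint_eq_sum_powerset (T : Multiset (Finset α)) (A : Finset α) :
    (T.countP (Disjoint A ·) : ℤ) = ∑ S ∈ A.powerset, (-1) ^ #S * (T.countP (S ⊆ ·) : ℤ) := by
  induction T using Multiset.induction with
  | empty => simp
  | cons B T ih =>
    have hblock : (if Disjoint A B then 1 else 0 : ℤ)
        = ∑ S ∈ A.powerset, (-1) ^ #S * (if S ⊆ B then 1 else 0 : ℤ) := by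
      simp only [mul_ite, mul_one, mul_zero, ← sum_filter]
      have : ({S ∈ A.powerset | S ⊆ B} : Finset (Finset α)) = (A ∩ B).powerset := by
        ext S
        simp only [mem_filter, mem_powerset, subset_inter_iff]
      simp only [this, sum_powerset_neg_one_pow_card, disjoint_iff_inter_eq_empty]
    simp only [Multiset.countP_cons, Nat.cast_add, Nat.cast_ite, Nat.cast_one, Nat.cast_zero,
      ih, hblock, mul_add, sum_add_distrib]

theorem countP_disjoint_eq_of_card_le [Fintype α] {t k : ℕ} (htk : t ≤ k)
    {T₁ T₂ : Multiset (Finset α)} (h₁ : ∀ B ∈ T₁, #B = k) (h₂ : ∀ B ∈ T₂, #B = k)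
    (hbal : ∀ A : Finset α, #A = t → T₁.countP (A ⊆ ·) = T₂.countP (A ⊆ ·))
    {A : Finset α} (hA : #A ≤ t) : T₁.countP (Disjoint A ·) = T₂.countP (Disjoint A ·) := by
  have hterms : ∀ S ∈ A.powerset, (T₁.countP (S ⊆ ·) : ℤ) = T₂.countP (S ⊆ ·) := fun S hS =>
    congrArg _ <| countP_subset_eq_of_card_le htk h₁ h₂ hbal
      ((card_le_card (mem_powerset.mp hS)).trans hA)
  have := countP_disjoint_eq_sum_powerset T₁ A
  rw [sum_congr rfl fun S hS => by rw [hterms S hS], ← countP_disjoint_eq_sum_powerset] at this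
  exact_mod_cast this

theorem subset_foundation {T₁ T₂ : Multiset (Finset α)} {B : Finset α} (hB : B ∈ T₁ + T₂) :
    B ⊆ foundation T₁ T₂ :=
  subset_biUnion_of_mem id (Multiset.mem_toFinset.mpr hB)

theorem subset_of_disjoint_sdiff {F B C : Finset α} (hCF : C ⊆ F) (hd : Disjoint (F \ B) C) :
    C ⊆ B := fun x hx => by
  by_contra hxB
  exact disjoint_left.mp hd (mem_sdiff.mpr ⟨hCF hx, hxB⟩) hx

theorem trade_foundation_lower_bound_general (v t k : ℕ) (htk : t < k)
    (T1 T2 : Multiset (Finset (Fin v))) (hT : IsTrade t k T1 T2) :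
    k + t + 1 ≤ (foundation T1 T2).card := by
  obtain ⟨h₁, h₂, hdisj, hne, hbal⟩ := hT
  by_contra! hsmall
  obtain ⟨B, hB⟩ := Multiset.exists_mem_of_ne_zero hne
  set F := foundation T1 T2
  have hBF : B ⊆ F := subset_foundation (Multiset.mem_add.mpr (Or.inl hB))
  have hA : #(F \ B) ≤ t := by
    rw [card_sdiff_of_subset hBF, h₁ B hB]
    omega
  have hpos : 0 < T1.countP (Disjoint (F \ B) ·) :=
    Multiset.countP_pos.mpr ⟨B, hB, sdiff_disjoint⟩
  have hzero : T2.countP (Disjoint (F \ B) ·) = 0 := by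
    refine Multiset.countP_eq_zero.mpr fun C hC hd => hdisj B hB ?_
    have hCF : C ⊆ F := subset_foundation (Multiset.mem_add.mpr (Or.inr hC))
    have hCB : C = B :=
      eq_of_subset_of_card_le (subset_of_disjoint_sdiff hCF hd) (by rw [h₁ B hB, h₂ C hC])
    exact hCB ▸ hC
  have := countP_disjoint_eq_of_card_le htk.le h₁ h₂ hbal hA
  omega

/-- Every `t`-`(v,k)` trade `T` satisfies `|found(T)| ≥ k + t + 1`. -/
theorem trade_foundation_lower_bound (v t k : ℕ) (ht : 0 < t) (htk : t < k) (hkv : k < v)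
    (T1 T2 : Multiset (Finset (Fin v))) (hT : IsTrade t k T1 T2) :
    k + t + 1 ≤ (foundation T1 T2).card :=
  trade_foundation_lower_bound_general v t k htk T1 T2 hT
end
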